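/- The expected value of the poisoned regression function under the backdoor input distribution equals ((1−ρ)/ρ) times the mean absolute deviation between the clean and poisoned regression functions under the clean input distribution: ∫ f^poi_*(x) μ^bd_X(x) dx = ((1−ρ)/ρ) ∫ ( f^cl_*(x) − f^poi_*(x) ) μ^cl_X(x) dx. -/
import Mathlib


open MeasureTheory Real
open scoped RealInnerProductSpace

noncomputable section

/-- The clean input density `μ^cl_X(x) = λ ν₁(x) + (1-λ) ν₀(x)`. -/
def muCl {p : ℕ} (lam : ℝ) (ν : Fin 2 → EuclideanSpace ℝ (Fin p) → ℝ)
    (x : EuclideanSpace ℝ (Fin p)) : ℝ :=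
  lam * ν 1 x + (1 - lam) * ν 0 x

/-- The backdoor input density `μ^bd_X(x) = λ ν₁(x-η) + (1-λ) ν₀(x-η)`. -/
def muBd {p : ℕ} (lam : ℝ) (ν : Fin 2 → EuclideanSpace ℝ (Fin p) → ℝ)
    (η x : EuclideanSpace ℝ (Fin p)) : ℝ :=
  lam * ν 1 (x - η) + (1 - lam) * ν 0 (x - η)

/-- The poisoned input density `μ^poi_X = (1-ρ) μ^cl_X + ρ μ^bd_X`. -/
def muPoi {p : ℕ} (lam ρ : ℝ) (ν : Fin 2 → EuclideanSpace ℝ (Fin p) → ℝ)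
    (η x : EuclideanSpace ℝ (Fin p)) : ℝ :=
  (1 - ρ) * muCl lam ν x + ρ * muBd lam ν η x

/-- The clean regression function `f^cl_*(x) = λ ν₁(x) / μ^cl_X(x)`. -/
def fCl {p : ℕ} (lam : ℝ) (ν : Fin 2 → EuclideanSpace ℝ (Fin p) → ℝ)
    (x : EuclideanSpace ℝ (Fin p)) : ℝ :=
  lam * ν 1 x / muCl lam ν x

/-- The poisoned regression function `f^poi_*(x) = (1-ρ) λ ν₁(x) / μ^poi_X(x)`. -/
def fPoi {p : ℕ} (lam ρ : ℝ) (ν : Fin 2 → EuclideanSpace ℝ (Fin p) → ℝ)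
    (η x : EuclideanSpace ℝ (Fin p)) : ℝ :=
  (1 - ρ) * lam * ν 1 x / muPoi lam ρ ν η x

/-- The tail function `h_i^η(r) = ∫_{x : |(x-m)ᵀη| ≥ r ‖η‖₂} ν(x) dx`. -/
def tailProb {p : ℕ} (ν : EuclideanSpace ℝ (Fin p) → ℝ) (m η : EuclideanSpace ℝ (Fin p))
    (r : ℝ) : ℝ :=
  ∫ x in {x : EuclideanSpace ℝ (Fin p) | r * ‖η‖ ≤ |⟪x - m, η⟫|}, ν x

/-- A Lebesgue probability density on `ℝ^p`. -/
def IsProbDensity {p : ℕ} (ν : EuclideanSpace ℝ (Fin p) → ℝ) : Prop :=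
  Measurable ν ∧ (∀ x, 0 ≤ ν x) ∧ Integrable ν ∧ (∫ x, ν x) = 1

/-- `m` is the mean of the probability density `ν`. -/
def HasCondMean {p : ℕ} (ν : EuclideanSpace ℝ (Fin p) → ℝ)
    (m : EuclideanSpace ℝ (Fin p)) : Prop :=
  (∫ x, ν x • x) = m

/-- Monotone-density assumption: the density decreases along any ray from its mean. -/
def MonotoneDensity {p : ℕ} (ν : EuclideanSpace ℝ (Fin p) → ℝ)
    (m : EuclideanSpace ℝ (Fin p)) : Prop :=
  ∀ (η : EuclideanSpace ℝ (Fin p)) (c1 c2 : ℝ), 0 < c1 → c1 < c2 →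
    ν (m - c2 • η) ≤ ν (m - c1 • η)

/-- The loss `ℓ` is `(C,α)`-Hölder on `[0,1]²`. -/
def IsHolderLoss (ℓ : ℝ → ℝ → ℝ) (C α : ℝ) : Prop :=
  ∀ x ∈ Set.Icc (0:ℝ) 1, ∀ y ∈ Set.Icc (0:ℝ) 1, ∀ z ∈ Set.Icc (0:ℝ) 1,
    |ℓ x y - ℓ x z| ≤ C * |y - z| ^ α ∧ |ℓ x y - ℓ z y| ≤ C * |x - z| ^ α

/-- Eq. (13) in the proof of Theorem 1: the expectation of the
poisoned regression function under the backdoor input distribution equals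
`((1-ρ)/ρ)` times the mean absolute deviation between the clean and poisoned
regression functions under the clean input distribution:
`∫ f^poi_*(x) μ^bd_X(x) dx = ((1-ρ)/ρ) ∫ (f^cl_*(x) - f^poi_*(x)) μ^cl_X(x) dx`. -/
theorem poisoned_regression_backdoor_mean {p : ℕ} (hp : 1 ≤ p)
    (ν : Fin 2 → EuclideanSpace ℝ (Fin p) → ℝ) (m : Fin 2 → EuclideanSpace ℝ (Fin p))
    (lam ρ : ℝ) (hlam : lam ∈ Set.Ioo (0:ℝ) 1) (hρ : ρ ∈ Set.Ioo (0:ℝ) 1)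
    (hν : ∀ i, IsProbDensity (ν i))
    (η : EuclideanSpace ℝ (Fin p)) :
    (∫ x, fPoi lam ρ ν η x * muBd lam ν η x) =
      (1 - ρ) / ρ * ∫ x, (fCl lam ν x - fPoi lam ρ ν η x) * muCl lam ν x := by
  have hρ0 : ρ ≠ 0 := ne_of_gt hρ.1
  rw [← MeasureTheory.integral_const_mul]
  refine integral_congr_ae (Filter.Eventually.of_forall fun x => ?_)
  have hν1 : 0 ≤ ν 1 x := (hν 1).2.1 x
  have hν1' : 0 ≤ ν 1 (x - η) := (hν 1).2.1 _
  have hν0 : 0 ≤ ν 0 x := (hν 0).2.1 x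
  have hν0' : 0 ≤ ν 0 (x - η) := (hν 0).2.1 _
  have hc : 0 ≤ muCl lam ν x := by
    unfold muCl; nlinarith [hlam.1, hlam.2]
  have hb : 0 ≤ muBd lam ν η x := by
    unfold muBd; nlinarith [hlam.1, hlam.2]
  have ha : 0 ≤ lam * ν 1 x := mul_nonneg hlam.1.le hν1
  have hac : lam * ν 1 x ≤ muCl lam ν x := by
    unfold muCl; nlinarith [hlam.2]
  unfold fPoi fCl muPoi
  beta_reduce
  by_cases hP : (1 - ρ) * muCl lam ν x + ρ * muBd lam ν η x = 0
  · have hc0 : muCl lam ν x = 0 := by nlinarith [hρ.1, hρ.2]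
    have hb0 : muBd lam ν η x = 0 := by nlinarith [hρ.1, hρ.2]
    have ha0 : lam * ν 1 x = 0 := le_antisymm (hac.trans_eq hc0) ha
    rw [hP, hc0, hb0]
    simp [mul_assoc, ha0]
  · by_cases hc0 : muCl lam ν x = 0
    · have ha0 : lam * ν 1 x = 0 := le_antisymm (hac.trans_eq hc0) ha
      rw [hc0]
      simp [mul_assoc, ha0]
    · field_simp
      ring

end
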